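/- arXiv:1907.13204 — 2 statements merged into one kernel-verified Lean document; each statement's English description precedes it below -/
import Mathlib

section
/- Let F be a transitive countable relational structure with a bounded 1-supported metric-like stationary independence relation ⫫, and let g ∈ Aut(F) be such that g moves every type over every finite set almost maximally or by distance n. Then there exists h ∈ Aut(F) such that the commutator [g,h] = g⁻¹h⁻¹gh moves every type over every finite set almost maximally or by distance 2n. -/
open FirstOrder

namespace PaperSIR

/-- The group structure on the automorphism group of a first-order structure. -/
instance autGroup {L : FirstOrder.Language} {F : Type*} [L.Structure F] :
    Group (F ≃[L] F) where
  mul f g := f.comp g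
  one := FirstOrder.Language.Equiv.refl L F
  inv := FirstOrder.Language.Equiv.symm
  mul_assoc f g h := (FirstOrder.Language.Equiv.comp_assoc h g f).symm
  one_mul := FirstOrder.Language.Equiv.refl_comp
  mul_one := FirstOrder.Language.Equiv.comp_refl
  inv_mul_cancel := FirstOrder.Language.Equiv.symm_comp_self

variable {L : FirstOrder.Language} {F : Type*} [L.Structure F] [DecidableEq F]

/-- The tuples `a` and `a'` have the same type over the finite set `X`, i.e. some
automorphism of `F` fixing `X` pointwise maps `a` to `a'`. -/
def SameTypeOver (L : FirstOrder.Language) {F : Type*} [L.Structure F] (X : Finset F) {n : ℕ} (a a' : Fin n → F) : Prop :=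
  ∃ g : F ≃[L] F, (∀ x ∈ X, g x = x) ∧ ∀ i, g (a i) = a' i

/-- The finite set enumerated by a tuple. -/
def fset {n : ℕ} (a : Fin n → F) : Finset F :=
  Finset.image a Finset.univ

/-- A stationary independence relation (SIR) on `F`: a ternary relation on finite
subsets of `F` satisfying Invariance, Symmetry, Monotonicity, Existence, Transitivity
and Stationarity. -/
structure IsSIR (indep : Finset F → Finset F → Finset F → Prop) : Prop where
  invariance : ∀ (g : F ≃[L] F) (A C B : Finset F),
    indep A C B ↔ indep (A.image g) (C.image g) (B.image g)
  symmetry : ∀ A C B, indep A C B → indep B C A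
  monotonicity_left : ∀ A C B D, indep A C (B ∪ D) → indep A C B
  monotonicity_right : ∀ A C B D, indep A C (B ∪ D) → indep A (B ∪ C) D
  existence : ∀ {n : ℕ} (a : Fin n → F) (C B : Finset F),
    ∃ a' : Fin n → F, SameTypeOver L C a a' ∧ indep (fset a') C B
  transitivity : ∀ A C B B', indep A C B → indep A (B ∪ C) B' → indep A C B'
  stationarity : ∀ {n : ℕ} (a a' : Fin n → F) (C B : Finset F),
    SameTypeOver L C a a' → indep (fset a) C B → indep (fset a') C B →
    SameTypeOver L (B ∪ C) a a'

/-- The three extra conditions making a SIR metric-like. -/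
structure IsMetricLike (indep : Finset F → Finset F → Finset F → Prop) : Prop where
  not_self : ∀ (a : F) (A : Finset F), a ∉ A → ¬ indep {a} A {a}
  exists_dep : ∀ a : F, ∃ b : F, b ≠ a ∧ ¬ indep {a} ∅ {b}
  perfect_triviality : ∀ A C B C', indep A C B → C ⊆ C' → indep A C' B

/-- A SIR is 1-supported if whenever `a ⫫_C b` there is `C' ⊆ C` with `|C'| ≤ 1`
and `a ⫫_{C'} b`. -/
def OneSupported (indep : Finset F → Finset F → Finset F → Prop) : Prop :=
  ∀ (a b : F) (C : Finset F), indep {a} C {b} →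
    ∃ C' ⊆ C, C'.card ≤ 1 ∧ indep {a} C' {b}

/-- A sequence of pairwise distinct vertices is geodesic if `aᵢ ⫫_{aⱼ} aₖ`
whenever `i < j < k`. -/
def IsGeodesic (indep : Finset F → Finset F → Finset F → Prop)
    {n : ℕ} (a : Fin n → F) : Prop :=
  Function.Injective a ∧ ∀ i j k : Fin n, i < j → j < k → indep {a i} {a j} {a k}

/-- `k₀` is a bound for the SIR: every geodesic sequence `a₀, …, a_k` with `k ≥ k₀`
satisfies `a₀ ⫫_∅ a_k`. -/
def BoundedBy (indep : Finset F → Finset F → Finset F → Prop) (k₀ : ℕ) : Prop :=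
  ∀ k : ℕ, k₀ ≤ k → ∀ a : Fin (k + 1) → F, IsGeodesic indep a →
    indep {a 0} ∅ {a (Fin.last k)}

/-- A SIR is bounded if some `k₀` is a bound for it. -/
def Bounded (indep : Finset F → Finset F → Finset F → Prop) : Prop :=
  ∃ k₀ : ℕ, BoundedBy indep k₀

/-- `‖⫫‖`: the least bound of a bounded SIR. -/
noncomputable def sirNorm (indep : Finset F → Finset F → Finset F → Prop) : ℕ :=
  sInf {k₀ : ℕ | BoundedBy indep k₀}

/-- `F` is transitive: all elements have the same type, i.e. `Aut(F)` acts
transitively. -/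
def TransitiveStruct (L : FirstOrder.Language) (F : Type*) [L.Structure F] : Prop :=
  ∀ a b : F, ∃ g : F ≃[L] F, g a = b

/-- `b` is almost free from `a`: `¬ a ⫫_∅ b` and every `c ∉ {a, b}` with `a ⫫_b c`
satisfies `a ⫫_∅ c`. -/
def AlmostFreeFrom (indep : Finset F → Finset F → Finset F → Prop) (b a : F) : Prop :=
  ¬ indep {a} ∅ {b} ∧
    ∀ c : F, c ≠ a → c ≠ b → indep {a} {b} {c} → indep {a} ∅ {c}

/-- `g` moves the type `tp(x/X)` almost maximally: some realisation `x'` of it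
satisfies `x' ⫫_X g(x')`. -/
def MovesAlmostMaximally (indep : Finset F → Finset F → Finset F → Prop)
    (g : F ≃[L] F) (X : Finset F) (x : F) : Prop :=
  ∃ x' : F, SameTypeOver L X ![x] ![x'] ∧ indep {x'} X {g x'}

/-- `g` moves the type `tp(x/X)` by distance `k`: there is a realisation `x'` and a
geodesic sequence `x' = c₀, …, c_k = g(x')`. -/
def MovesByDistance (indep : Finset F → Finset F → Finset F → Prop)
    (g : F ≃[L] F) (X : Finset F) (x : F) (k : ℕ) : Prop :=
  ∃ x' : F, SameTypeOver L X ![x] ![x'] ∧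
    ∃ c : Fin (k + 1) → F, IsGeodesic indep c ∧ c 0 = x' ∧ c (Fin.last k) = g x'

end PaperSIR

open PaperSIR

set_option linter.unusedSectionVars false

namespace PaperSIRAux

open FirstOrder PaperSIR

variable {L : FirstOrder.Language} {F : Type*} [L.Structure F] [DecidableEq F]
variable {indep : Finset F → Finset F → Finset F → Prop}

lemma fset_one (a : Fin 1 → F) : fset a = {a 0} := by
  ext b
  simp only [fset, Finset.mem_image, Finset.mem_univ, true_and, Finset.mem_singleton]
  exact ⟨fun ⟨i, hi⟩ => by rw [Fin.fin_one_eq_zero i] at hi; exact hi.symm, fun h => ⟨0, h.symm⟩⟩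

lemma sto_refl (X : Finset F) {m : ℕ} (a : Fin m → F) : SameTypeOver L X a a :=
  ⟨FirstOrder.Language.Equiv.refl L F, fun _ _ => rfl, fun _ => rfl⟩

lemma sto_comp {X : Finset F} {m : ℕ} {a b c : Fin m → F}
    (h1 : SameTypeOver L X a b) (h2 : SameTypeOver L X b c) : SameTypeOver L X a c := by
  obtain ⟨σ, hσ, ha⟩ := h1; obtain ⟨ρ, hρ, hb⟩ := h2
  refine ⟨ρ.comp σ, fun y hy => ?_, fun i => ?_⟩
  · rw [FirstOrder.Language.Equiv.comp_apply, hσ y hy, hρ y hy]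
  · rw [FirstOrder.Language.Equiv.comp_apply, ha i, hb i]

lemma sto_mono {X X' : Finset F} (hX : X' ⊆ X) {m : ℕ} {a b : Fin m → F}
    (h : SameTypeOver L X a b) : SameTypeOver L X' a b := by
  obtain ⟨σ, hσ, ha⟩ := h
  exact ⟨σ, fun y hy => hσ y (hX hy), ha⟩

section SIR

variable (hS : IsSIR (L := L) indep)
include hS

lemma sub_right {A C B B' : Finset F} (h : indep A C B) (hB : B' ⊆ B) : indep A C B' :=
  hS.monotonicity_left A C B' B (by rwa [Finset.union_eq_right.mpr hB])

lemma sub_left {A C B A' : Finset F} (h : indep A C B) (hA : A' ⊆ A) : indep A' C B :=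
  hS.symmetry _ _ _ (sub_right hS (hS.symmetry _ _ _ h) hA)

omit hS in
lemma img_fix {σ : F ≃[L] F} {C : Finset F} (h : ∀ y ∈ C, σ y = y) : C.image ⇑σ = C := by
  ext b
  simp only [Finset.mem_image]
  constructor
  · rintro ⟨a, ha, rfl⟩; rwa [h a ha]
  · exact fun hb => ⟨b, hb, h b hb⟩

lemma transport (σ : F ≃[L] F) {A C B : Finset F}
    (hC : ∀ y ∈ C, σ y = y) (hB : ∀ y ∈ B, σ y = y) (h : indep A C B) :
    indep (A.image ⇑σ) C B := by
  have := (hS.invariance σ A C B).mp h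
  rwa [img_fix hC, img_fix hB] at this

lemma inv1 (σ : F ≃[L] F) {a b : F} (C : Finset F) (h : indep {a} C {b}) :
    indep {σ a} (C.image ⇑σ) {σ b} := by
  have := (hS.invariance σ {a} C {b}).mp h
  simpa using this

lemma inv1s (σ : F ≃[L] F) {a b c : F} (h : indep {a} {c} {b}) :
    indep {σ a} {σ c} {σ b} := by
  have := inv1 hS σ {c} h
  simpa using this

lemma inv1e (σ : F ≃[L] F) {a b : F} (h : indep {a} ∅ {b}) :
    indep {σ a} ∅ {σ b} := by
  have := inv1 hS σ ∅ h
  simpa using this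

lemma geo_image (σ : F ≃[L] F) {m : ℕ} {c : Fin m → F} (h : IsGeodesic indep c) :
    IsGeodesic indep (⇑σ ∘ c) := by
  refine ⟨σ.injective.comp h.1, fun i j k hij hjk => ?_⟩
  exact inv1s hS σ (h.2 i j k hij hjk)

lemma geo_rev {m : ℕ} {c : Fin (m+1) → F} (h : IsGeodesic indep c) :
    IsGeodesic indep (c ∘ Fin.rev) := by
  refine ⟨h.1.comp Fin.rev_injective, fun i j k hij hjk => ?_⟩
  exact hS.symmetry _ _ _ (h.2 k.rev j.rev i.rev (by simpa using hjk) (by simpa using hij))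

end SIR

end PaperSIRAux

namespace PaperSIRAux

open FirstOrder PaperSIR

set_option linter.unusedSectionVars false

variable {L : FirstOrder.Language} {F : Type*} [L.Structure F] [DecidableEq F]
variable {indep : Finset F → Finset F → Finset F → Prop}

section SIR2

variable (hS : IsSIR (L := L) indep) (hML : IsMetricLike indep)

include hS hML in
lemma ne_of_indep_base {a b c : F} (h : indep {a} {c} {b}) (hac : a ≠ c) : a ≠ b := by
  rintro rfl
  exact hML.not_self a {c} (by simpa using hac) h

include hS hML in
lemma ne_of_indep_empty {a b : F} (h : indep {a} ∅ {b}) : a ≠ b := by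
  rintro rfl
  exact hML.not_self a ∅ (by simp) h

include hS hML in
lemma concat {na mb : ℕ}
    (u : Fin (na+1) → F) (v : Fin (mb+1) → F)
    (hu : IsGeodesic indep u) (hv : IsGeodesic indep v)
    (hj : u (Fin.last na) = v 0)
    (cross : ∀ (i : Fin (na+1)) (k : Fin (mb+1)), (i:ℕ) < na → 0 < (k:ℕ) →
      indep {u i} {u (Fin.last na)} {v k}) :
    ∃ c : Fin (na+mb+1) → F, IsGeodesic indep c ∧ c 0 = u 0 ∧
      c (Fin.last (na+mb)) = v (Fin.last mb) := by
  classical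
  set c : Fin (na+mb+1) → F := fun p =>
    if h : (p:ℕ) ≤ na then u ⟨p, by omega⟩ else v ⟨(p:ℕ) - na, by omega⟩ with hc
  have hcu : ∀ (p : Fin (na+mb+1)) (hp : (p:ℕ) ≤ na), c p = u ⟨p, by omega⟩ := by
    intro p hp; simp only [hc, dif_pos hp]
  have hcv : ∀ (p : Fin (na+mb+1)) (hp : na ≤ (p:ℕ)), c p = v ⟨(p:ℕ) - na, by omega⟩ := by
    intro p hp
    by_cases h : (p:ℕ) ≤ na
    · have hpn : (p:ℕ) = na := le_antisymm h hp
      rw [hcu p h]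
      have h1 : (⟨p, by omega⟩ : Fin (na+1)) = Fin.last na := by
        apply Fin.ext; simp [hpn]
      have h2 : (⟨(p:ℕ) - na, by omega⟩ : Fin (mb+1)) = 0 := by
        apply Fin.ext; simp [hpn]
      rw [h1, h2, hj]
    · simp only [hc, dif_neg h]
  have hinj : Function.Injective c := by
    intro p q hpq
    by_cases hp : (p:ℕ) ≤ na <;> by_cases hq : (q:ℕ) ≤ na
    · rw [hcu p hp, hcu q hq] at hpq
      have := hu.1 hpq
      apply Fin.ext
      simpa [Fin.ext_iff] using this
    · exfalso
      by_cases hpn : (p:ℕ) = na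
      · rw [hcv p (by omega), hcv q (by omega)] at hpq
        have := hv.1 hpq
        simp [Fin.ext_iff, hpn] at this
        omega
      · rw [hcu p hp, hcv q (by omega)] at hpq
        have hcr := cross ⟨p, by omega⟩ ⟨(q:ℕ) - na, by omega⟩ (by simp; omega) (by simp; omega)
        rw [hpq] at hcr
        have hne : v ⟨(q:ℕ) - na, by omega⟩ ≠ u (Fin.last na) := by
          intro he
          rw [← hpq] at he
          have := hu.1 he
          simp [Fin.ext_iff] at this
          omega
        exact hML.not_self _ _ (by simpa using hne) hcr
    · exfalso
      by_cases hqn : (q:ℕ) = na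
      · rw [hcv q (by omega), hcv p (by omega)] at hpq
        have := hv.1 hpq
        simp [Fin.ext_iff, hqn] at this
        omega
      · rw [hcu q hq, hcv p (by omega)] at hpq
        have hcr := cross ⟨q, by omega⟩ ⟨(p:ℕ) - na, by omega⟩ (by simp; omega) (by simp; omega)
        rw [← hpq] at hcr
        have hne : v ⟨(p:ℕ) - na, by omega⟩ ≠ u (Fin.last na) := by
          intro he
          rw [hpq] at he
          have := hu.1 he
          simp [Fin.ext_iff] at this
          omega
        exact hML.not_self _ _ (by simpa using hne) hcr
    · rw [hcv p (by omega), hcv q (by omega)] at hpq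
      have := hv.1 hpq
      apply Fin.ext
      simp [Fin.ext_iff] at this
      omega
  refine ⟨c, ⟨hinj, ?_⟩, ?_, ?_⟩
  · intro i j k hij hjk
    have hij' : (i:ℕ) < (j:ℕ) := hij
    have hjk' : (j:ℕ) < (k:ℕ) := hjk
    by_cases hk : (k:ℕ) ≤ na
    · rw [hcu i (by omega), hcu j (by omega), hcu k (by omega)]
      exact hu.2 _ _ _ (by simp [Fin.mk_lt_mk]; omega) (by simp [Fin.mk_lt_mk]; omega)
    · by_cases hi : na < (i:ℕ)
      · rw [hcv i (by omega), hcv j (by omega), hcv k (by omega)]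
        exact hv.2 _ _ _ (by simp [Fin.mk_lt_mk]; omega) (by simp [Fin.mk_lt_mk]; omega)
      · push_neg at hi hk
        by_cases hjna : (j:ℕ) ≤ na
        · rw [hcu i (by omega), hcu j hjna, hcv k (by omega)]
          by_cases hje : (j:ℕ) = na
          · have hjl : (⟨j, by omega⟩ : Fin (na+1)) = Fin.last na := by
              apply Fin.ext; simpa
            rw [hjl]
            exact cross _ _ (by simp; omega) (by simp; omega)
          · have h1 : indep {u ⟨i, by omega⟩} {u ⟨j, by omega⟩} {u (Fin.last na)} :=
              hu.2 _ _ _ (by simp [Fin.mk_lt_mk]; omega)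
                (by simp [Fin.lt_iff_val_lt_val]; omega)
            have h2 : indep {u ⟨i, by omega⟩} {u (Fin.last na)}
                {v ⟨(k:ℕ) - na, by omega⟩} :=
              cross _ _ (by simp; omega) (by simp; omega)
            have h3 : indep {u ⟨i, by omega⟩} ({u (Fin.last na)} ∪ {u ⟨j, by omega⟩})
                {v ⟨(k:ℕ) - na, by omega⟩} :=
              hML.perfect_triviality _ _ _ _ h2 Finset.subset_union_left
            exact hS.transitivity _ _ _ _ h1 h3
        · push_neg at hjna
          rw [hcv j (by omega), hcv k (by omega)]
          by_cases hie : (i:ℕ) = na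
          · rw [hcv i (by omega)]
            have h2 : (⟨(i:ℕ) - na, by omega⟩ : Fin (mb+1)) = 0 := by
              apply Fin.ext; simp [hie]
            rw [h2]
            exact hv.2 _ _ _ (by simp [Fin.lt_iff_val_lt_val]; omega)
              (by simp [Fin.lt_iff_val_lt_val]; omega)
          · rw [hcu i (by omega)]
            apply hS.symmetry
            have h1 : indep {v ⟨(k:ℕ) - na, by omega⟩} {v ⟨(j:ℕ) - na, by omega⟩} {v 0} :=
              hS.symmetry _ _ _ (hv.2 0 ⟨(j:ℕ) - na, by omega⟩ ⟨(k:ℕ) - na, by omega⟩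
                (by simp [Fin.lt_iff_val_lt_val]; omega)
                (by simp [Fin.lt_iff_val_lt_val]; omega))
            have h2 : indep {v ⟨(k:ℕ) - na, by omega⟩} {u (Fin.last na)} {u ⟨i, by omega⟩} :=
              hS.symmetry _ _ _ (cross _ _ (by simp; omega) (by simp; omega))
            rw [hj] at h2
            have h3 : indep {v ⟨(k:ℕ) - na, by omega⟩} ({v 0} ∪ {v ⟨(j:ℕ) - na, by omega⟩})
                {u ⟨i, by omega⟩} :=
              hML.perfect_triviality _ _ _ _ h2 Finset.subset_union_left
            exact hS.transitivity _ _ _ _ h1 h3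
  · rw [hcu 0 (by simp)]
    congr 1
  · rw [hcv (Fin.last (na+mb)) (by simp)]
    congr 1
    apply Fin.ext
    simp

end SIR2

end PaperSIRAux

namespace PaperSIRAux

open FirstOrder PaperSIR

variable {L : FirstOrder.Language} {F : Type*} [L.Structure F] [DecidableEq F]
variable {indep : Finset F → Finset F → Finset F → Prop}

section SIR3

variable (hS : IsSIR (L := L) indep) (hML : IsMetricLike indep)

include hS in
lemma fresh_seq (x0 : F) : ∀ (m : ℕ) (G : Finset F), ∃ q : Fin m → F,
    ∀ j : Fin m, (∀ p ∈ G, indep {q j} ∅ {p}) ∧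
      (∀ j' : Fin m, j' < j → indep {q j} ∅ {q j'}) := by
  intro m
  induction m with
  | zero => exact fun G => ⟨Fin.elim0, fun j => j.elim0⟩
  | succ m ih =>
    intro G
    obtain ⟨q, hq⟩ := ih G
    obtain ⟨a', hsto, hfr⟩ := hS.existence ![x0] ∅ (G ∪ fset q)
    rw [fset_one] at hfr
    set qm := a' 0 with hqm
    refine ⟨Fin.snoc q qm, fun j => ?_⟩
    refine Fin.lastCases ?_ ?_ j
    · constructor
      · intro p hp
        rw [Fin.snoc_last]
        exact sub_right hS hfr (Finset.singleton_subset_iff.mpr (Finset.mem_union_left _ hp))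
      · intro j' hj'
        rw [Fin.snoc_last]
        have hj'' : j' ≠ Fin.last m := Fin.ne_of_lt hj'
        obtain ⟨j0, rfl⟩ := Fin.exists_castSucc_eq.mpr hj''
        rw [Fin.snoc_castSucc]
        refine sub_right hS hfr (Finset.singleton_subset_iff.mpr
          (Finset.mem_union_right _ ?_))
        simp [fset]
    · intro j0
      constructor
      · intro p hp
        rw [Fin.snoc_castSucc]
        exact (hq j0).1 p hp
      · intro j' hj'
        have hj'' : j' ≠ Fin.last m := by
          intro h; subst h
          have h1 := j0.isLt
          simp only [Fin.lt_iff_val_lt_val, Fin.val_last, Fin.coe_castSucc] at hj'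
          omega
        obtain ⟨j1, rfl⟩ := Fin.exists_castSucc_eq.mpr hj''
        rw [Fin.snoc_castSucc, Fin.snoc_castSucc]
        exact (hq j0).2 j1 (by rwa [Fin.castSucc_lt_castSucc_iff] at hj')

include hS hML in
lemma fresh_chain (x0 : F) {k : ℕ} (hk : 1 ≤ k) {a b : F} (hab : indep {a} ∅ {b})
    (G : Finset F) :
    ∃ c : Fin (k+1) → F, IsGeodesic indep c ∧ c 0 = a ∧ c (Fin.last k) = b ∧
      (∀ j : Fin (k+1), j ≠ 0 → j ≠ Fin.last k → ∀ p ∈ G, indep {c j} ∅ {p}) := by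
  classical
  obtain ⟨q, hq⟩ := fresh_seq hS x0 (k-1) (G ∪ {a, b})
  have hqG : ∀ j, ∀ p ∈ G ∪ {a, b}, indep {q j} ∅ {p} := fun j => (hq j).1
  set c : Fin (k+1) → F := fun p =>
    if h0 : (p:ℕ) = 0 then a else if hl : (p:ℕ) = k then b else q ⟨(p:ℕ) - 1, by omega⟩
    with hcdef
  have hca : ∀ (p : Fin (k+1)), (p:ℕ) = 0 → c p = a := by
    intro p hp; simp only [hcdef, dif_pos hp]
  have hcb : ∀ (p : Fin (k+1)), (p:ℕ) = k → c p = b := by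
    intro p hp
    simp only [hcdef]
    rw [dif_neg (by omega), dif_pos hp]
  have hcm : ∀ (p : Fin (k+1)) (h0 : (p:ℕ) ≠ 0) (hl : (p:ℕ) ≠ k),
      c p = q ⟨(p:ℕ) - 1, by omega⟩ := by
    intro p h0 hl
    simp only [hcdef]
    rw [dif_neg h0, dif_neg hl]
  have hc0 : c 0 = a := hca 0 rfl
  have hcl : c (Fin.last k) = b := hcb _ (by simp)
  have hne_ab : a ≠ b := ne_of_indep_empty hS hML hab
  have hne_qa : ∀ j, q j ≠ a := fun j =>
    ne_of_indep_empty hS hML (hqG j a (by simp))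
  have hne_qb : ∀ j, q j ≠ b := fun j =>
    ne_of_indep_empty hS hML (hqG j b (by simp))
  have hne_qq : ∀ j j', j ≠ j' → q j ≠ q j' := by
    intro j j' hjj'
    rcases lt_or_gt_of_ne hjj' with h | h
    · exact fun he => ne_of_indep_empty hS hML ((hq j').2 j h) he.symm
    · exact ne_of_indep_empty hS hML ((hq j).2 j' h)
  refine ⟨c, ⟨?_, ?_⟩, hc0, hcl, ?_⟩
  · -- injective
    intro p p' hpp'
    apply Fin.ext
    by_cases h0 : (p:ℕ) = 0 <;> by_cases h0' : (p':ℕ) = 0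
    · omega
    · exfalso
      rw [hca p h0] at hpp'
      by_cases hl' : (p':ℕ) = k
      · rw [hcb p' hl'] at hpp'; exact hne_ab hpp'
      · rw [hcm p' h0' hl'] at hpp'; exact hne_qa _ hpp'.symm
    · exfalso
      rw [hca p' h0'] at hpp'
      by_cases hl : (p:ℕ) = k
      · rw [hcb p hl] at hpp'; exact hne_ab hpp'.symm
      · rw [hcm p h0 hl] at hpp'; exact hne_qa _ hpp'
    · by_cases hl : (p:ℕ) = k <;> by_cases hl' : (p':ℕ) = k
      · omega
      · exfalso
        rw [hcb p hl, hcm p' h0' hl'] at hpp'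
        exact hne_qb _ hpp'.symm
      · exfalso
        rw [hcb p' hl', hcm p h0 hl] at hpp'
        exact hne_qb _ hpp'
      · rw [hcm p h0 hl, hcm p' h0' hl'] at hpp'
        by_contra hne
        exact hne_qq _ _ (fun he => by rw [Fin.ext_iff] at he; simp at he; omega) hpp'
  · -- geodesic triples
    intro i j k' hij hjk
    have hij' : (i:ℕ) < (j:ℕ) := hij
    have hjk' : (j:ℕ) < (k':ℕ) := hjk
    have hj0 : (j:ℕ) ≠ 0 := by omega
    have hjl : (j:ℕ) ≠ k := by have := k'.isLt; omega
    have hk'0 : (k':ℕ) ≠ 0 := by omega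
    rw [hcm j hj0 hjl]
    by_cases hi0 : (i:ℕ) = 0
    · rw [hca i hi0]
      by_cases hkl : (k':ℕ) = k
      · rw [hcb k' hkl]
        exact hML.perfect_triviality _ _ _ _ hab (by simp)
      · rw [hcm k' hk'0 hkl]
        have h1 := hqG ⟨(k':ℕ) - 1, by omega⟩ a (by simp)
        exact hML.perfect_triviality _ _ _ _ (hS.symmetry _ _ _ h1) (by simp)
    · have hil : (i:ℕ) ≠ k := by omega
      rw [hcm i hi0 hil]
      by_cases hkl : (k':ℕ) = k
      · rw [hcb k' hkl]
        have h1 := hqG ⟨(i:ℕ) - 1, by omega⟩ b (by simp)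
        exact hML.perfect_triviality _ _ _ _ h1 (by simp)
      · rw [hcm k' hk'0 hkl]
        have h1 := (hq ⟨(k':ℕ) - 1, by omega⟩).2 ⟨(i:ℕ) - 1, by omega⟩
          (by simp only [Fin.lt_iff_val_lt_val]; omega)
        exact hML.perfect_triviality _ _ _ _ (hS.symmetry _ _ _ h1) (by simp)
  · -- freshness of middles
    intro j hj0 hjl p hp
    have h0 : (j:ℕ) ≠ 0 := fun h => hj0 (Fin.ext h)
    have hl : (j:ℕ) ≠ k := fun h => hjl (Fin.ext (by simpa using h))
    rw [hcm j h0 hl]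
    exact hqG _ p (Finset.mem_union_left _ hp)

end SIR3

end PaperSIRAux

namespace PaperSIRAux

open FirstOrder PaperSIR

set_option linter.unusedSectionVars false

variable {L : FirstOrder.Language} {F : Type*} [L.Structure F] [DecidableEq F]
variable {indep : Finset F → Finset F → Finset F → Prop}

lemma sto1_intro {X : Finset F} {x x' : F} (σ : F ≃[L] F)
    (hfix : ∀ y ∈ X, σ y = y) (hx : σ x = x') : SameTypeOver L X ![x] ![x'] :=
  ⟨σ, hfix, fun i => by rw [Fin.fin_one_eq_zero i]; simpa using hx⟩

lemma sto1_elim {X : Finset F} {x x' : F} (h : SameTypeOver L X ![x] ![x']) :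
    ∃ σ : F ≃[L] F, (∀ y ∈ X, σ y = y) ∧ σ x = x' := by
  obtain ⟨σ, hfix, hx⟩ := h
  exact ⟨σ, hfix, by simpa using hx 0⟩

section SIR4

variable (hS : IsSIR (L := L) indep) (hML : IsMetricLike indep)

include hS hML in
lemma stripSet {a b : F} {C D : Finset F}
    (h1 : indep {a} C D) (h2 : indep {a} D {b}) : indep {a} C {b} :=
  hS.transitivity _ _ _ _ h1 (hML.perfect_triviality _ _ _ _ h2 Finset.subset_union_left)

include hS in
lemma geo_cast {m m' : ℕ} (h : m'+1 = m+1) {c : Fin (m+1) → F} (hc : IsGeodesic indep c) :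
    IsGeodesic indep (c ∘ Fin.cast h) := by
  refine ⟨hc.1.comp (Fin.cast_injective h), fun i j k hij hjk => ?_⟩
  exact hc.2 _ _ _ (by simpa using hij) (by simpa using hjk)

include hS in
lemma hgc (g : F ≃[L] F) (n : ℕ)
    (hg : ∀ (X : Finset F) (x : F),
      MovesAlmostMaximally indep g X x ∨ MovesByDistance indep g X x n)
    (X D : Finset F) (x : F) :
    ∃ x' : F, SameTypeOver L X ![x] ![x'] ∧ indep {x'} X (X ∪ D) ∧
      (indep {x'} (X ∪ D) {g x'} ∨
       ∃ cc : Fin (n+1) → F, IsGeodesic indep cc ∧ cc 0 = x' ∧ cc (Fin.last n) = g x') := by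
  obtain ⟨a1, hsto1, hfr1⟩ := hS.existence ![x] X (X ∪ D)
  rw [fset_one] at hfr1
  set x1 := a1 0 with hx1
  have ha1 : a1 = ![x1] := funext fun i => by rw [Fin.fin_one_eq_zero i]; rfl
  rw [ha1] at hsto1
  have key : ∀ x2 : F, SameTypeOver L (X ∪ D) ![x1] ![x2] →
      SameTypeOver L X ![x] ![x2] ∧ indep {x2} X (X ∪ D) := by
    intro x2 hsto2
    obtain ⟨σ2, hfix2, hx2⟩ := sto1_elim hsto2
    constructor
    · exact sto_comp hsto1 (sto_mono Finset.subset_union_left hsto2)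
    · have := transport hS σ2 (fun y hy => hfix2 y (Finset.mem_union_left _ hy))
        (fun y hy => hfix2 y hy) hfr1
      rwa [Finset.image_singleton, hx2] at this
  rcases hg (X ∪ D) x1 with hA | hB
  · obtain ⟨x2, hsto2, hind⟩ := hA
    obtain ⟨h1, h2⟩ := key x2 hsto2
    exact ⟨x2, h1, h2, Or.inl hind⟩
  · obtain ⟨x2, hsto2, cc, hgeo, hc0, hcl⟩ := hB
    obtain ⟨h1, h2⟩ := key x2 hsto2
    exact ⟨x2, h1, h2, Or.inr ⟨cc, hgeo, hc0, hcl⟩⟩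

end SIR4

end PaperSIRAux

namespace PaperSIRAux

open FirstOrder PaperSIR

set_option linter.unusedSectionVars false

variable {L : FirstOrder.Language} {F : Type*} [L.Structure F] [DecidableEq F]
variable {indep : Finset F → Finset F → Finset F → Prop}

lemma mem_fset {m : ℕ} (a : Fin m → F) (i : Fin m) : a i ∈ fset a :=
  Finset.mem_image.mpr ⟨i, Finset.mem_univ i, rfl⟩

section SIR5

variable (hS : IsSIR (L := L) indep) (hML : IsMetricLike indep)

include hS in
lemma fr_single {A C B : Finset F} {a b : F} (h : indep A C B)
    (ha : a ∈ A) (hb : b ∈ B) : indep {a} C {b} :=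
  sub_left hS (sub_right hS h (Finset.singleton_subset_iff.mpr hb))
    (Finset.singleton_subset_iff.mpr ha)

include hS hML in
lemma finish_empty (x0 : F) {n : ℕ} (hn : 1 ≤ n) {x' z : F}
    (h : indep {x'} ∅ {z}) :
    ∃ c : Fin (2*n+1) → F, IsGeodesic indep c ∧ c 0 = x' ∧ c (Fin.last (2*n)) = z := by
  obtain ⟨c, h1, h2, h3, _⟩ := fresh_chain hS hML x0 (k := 2*n) (by omega) h ∅
  exact ⟨c, h1, h2, h3⟩

include hS in
lemma eta_pack (g τ h₀ : F ≃[L] F) {S : Finset F} (hτS : ∀ s ∈ S, τ s = s)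
    {x' w w₂ : F} (hw : τ (h₀ x') = w) (hw2 : τ (h₀ (g x')) = w₂) :
    (indep {w₂} ∅ {g w} → indep {x'} ∅ {g.symm ((τ.comp h₀).symm (g w))}) ∧
    (∀ s ∈ S, indep {w₂} {s} {g w} →
      indep {x'} {g.symm (h₀.symm s)} {g.symm ((τ.comp h₀).symm (g w))}) ∧
    (indep {w₂} {w} {g w} →
      indep {x'} {g.symm x'} {g.symm ((τ.comp h₀).symm (g w))}) ∧
    (∀ s ∈ S, indep {w} {s} {g w} →
      indep {g.symm x'} {g.symm (h₀.symm s)} {g.symm ((τ.comp h₀).symm (g w))}) := by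
  have hτw : τ.symm w = h₀ x' := by rw [← hw]; exact τ.symm_apply_apply _
  have hτw2 : τ.symm w₂ = h₀ (g x') := by rw [← hw2]; exact τ.symm_apply_apply _
  have hτs : ∀ s ∈ S, τ.symm s = s := fun s hs =>
    (congrArg τ.symm (hτS s hs)).symm.trans (τ.symm_apply_apply s)
  set η : F ≃[L] F := ((τ.comp h₀).comp g).symm with hηdef
  have hηy : ∀ y, η y = g.symm (h₀.symm (τ.symm y)) := fun y => rfl
  have hηw2 : η w₂ = x' := by
    rw [hηy, hτw2, h₀.symm_apply_apply, g.symm_apply_apply]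
  have hηw : η w = g.symm x' := by
    rw [hηy, hτw, h₀.symm_apply_apply]
  have hηgw : η (g w) = g.symm ((τ.comp h₀).symm (g w)) := rfl
  have hηs : ∀ s ∈ S, η s = g.symm (h₀.symm s) := fun s hs => by
    rw [hηy, hτs s hs]
  refine ⟨?_, ?_, ?_, ?_⟩
  · intro h
    have := inv1e hS η h
    rwa [hηw2, hηgw] at this
  · intro s hs h
    have := inv1s hS η h
    rwa [hηw2, hηgw, hηs s hs] at this
  · intro h
    have := inv1s hS η h
    rwa [hηw2, hηgw, hηw] at this
  · intro s hs h
    have := inv1s hS η h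
    rwa [hηw, hηgw, hηs s hs] at this

end SIR5

end PaperSIRAux

namespace PaperSIRAux

open FirstOrder PaperSIR

set_option linter.unusedSectionVars false

variable {L : FirstOrder.Language} {F : Type*} [L.Structure F] [DecidableEq F]
variable {indep : Finset F → Finset F → Finset F → Prop}

section SIR6

variable (hS : IsSIR (L := L) indep) (hML : IsMetricLike indep)

include hS hML in
lemma main_cases (h1s : OneSupported indep) (x0 : F) {n : ℕ} (hn : 1 ≤ n)
    (g τ h₀ : F ≃[L] F) (S X : Finset F) (x' : F)
    (hτS : ∀ s ∈ S, τ s = s)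
    {w w₂ : F} (hw : τ (h₀ x') = w) (hw2 : τ (h₀ (g x')) = w₂)
    (hfrX : indep {x'} X
      (X ∪ (X.image ⇑g.symm ∪ S.image (fun s => g.symm (h₀.symm s)))))
    (hW2fr : indep {w₂} (S ∪ {w}) {g w})
    (hwcase : indep {w₂} {w} {g w} →
      (indep {x'} X {g.symm ((τ.comp h₀).symm (g w))} ∨
       ∃ c : Fin (2*n+1) → F, IsGeodesic indep c ∧ c 0 = x' ∧
         c (Fin.last (2*n)) = g.symm ((τ.comp h₀).symm (g w)))) :
    indep {x'} X {g.symm ((τ.comp h₀).symm (g w))} ∨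
      ∃ c : Fin (2*n+1) → F, IsGeodesic indep c ∧ c 0 = x' ∧
        c (Fin.last (2*n)) = g.symm ((τ.comp h₀).symm (g w)) := by
  obtain ⟨e1, e2, e3, e4⟩ := eta_pack hS g τ h₀ hτS hw hw2
  obtain ⟨C', hC'sub, hC'card, hC'⟩ := h1s w₂ (g w) (S ∪ {w}) hW2fr
  rcases Finset.eq_empty_or_nonempty C' with rfl | ⟨cpt, hcpt⟩
  · exact Or.inr (finish_empty hS hML x0 hn (e1 hC'))
  · have hC'eq : C' = {cpt} := Finset.eq_singleton_iff_unique_mem.mpr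
      ⟨hcpt, fun y hy => Finset.card_le_one.mp hC'card y hy cpt hcpt⟩
    rw [hC'eq] at hC'
    rcases Finset.mem_union.mp (hC'sub hcpt) with hsS | hweq
    · have h2 := e2 cpt hsS hC'
      have hpre : indep {x'} X {g.symm (h₀.symm cpt)} :=
        sub_right hS hfrX (Finset.singleton_subset_iff.mpr
          (Finset.mem_union_right _ (Finset.mem_union_right _
            (Finset.mem_image.mpr ⟨cpt, hsS, rfl⟩))))
      exact Or.inl (stripSet hS hML hpre h2)
    · rw [Finset.mem_singleton] at hweq
      subst hweq
      exact hwcase hC'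

include hS hML in
lemma bx_wcase (h1s : OneSupported indep) {n : ℕ} (hn : 1 ≤ n)
    (g τ h₀ : F ≃[L] F) (S : Finset F) (x' : F)
    (hτS : ∀ s ∈ S, τ s = s)
    {w : F} (hw : τ (h₀ x') = w)
    (ch : Fin (n+1) → F) (hch0 : ch 0 = x') (hchl : ch (Fin.last n) = g x')
    (hfrCh : ∀ (i : Fin (n+1)), ∀ s ∈ S, indep {ch i} ({x'} ∪ {g x'}) {h₀.symm s})
    (rst : Fin (n+1) → F) (hτch : ∀ i, τ (h₀ (ch i)) = rst i)
    (hgeoR : IsGeodesic indep rst)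
    (hfrRi : ∀ i, indep {rst i} (S ∪ {w}) {g w})
    (leg2 : Fin (n+1) → F) (hgeoL2 : IsGeodesic indep leg2)
    (hl20 : leg2 0 = w) (hl2l : leg2 (Fin.last n) = g w)
    (hfrL2 : ∀ (k i : Fin (n+1)), 0 < (k:ℕ) → (k:ℕ) < n →
      indep {leg2 k} ({w} ∪ {g w}) {rst i})
    (hiW : indep {rst (Fin.last n)} {w} {g w}) :
    ∃ c : Fin (2*n+1) → F, IsGeodesic indep c ∧ c 0 = x' ∧
      c (Fin.last (2*n)) = g.symm ((τ.comp h₀).symm (g w)) := by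
  classical
  have hr0 : rst 0 = w := by rw [← hτch 0, hch0]; exact hw
  have hw2 : τ (h₀ (g x')) = rst (Fin.last n) := by rw [← hchl]; exact hτch _
  -- The key uniform independence fact (U)
  have hU : ∀ i : Fin (n+1), indep {rst i} {w} {g w} := by
    intro i
    obtain ⟨C8, hC8sub, hC8card, hC8⟩ := h1s (rst i) (g w) (S ∪ {w}) (hfrRi i)
    rcases Finset.eq_empty_or_nonempty C8 with rfl | ⟨c8, hc8⟩
    · exact hML.perfect_triviality _ _ _ _ hC8 (Finset.empty_subset _)
    · have hC8eq : C8 = {c8} := Finset.eq_singleton_iff_unique_mem.mpr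
        ⟨hc8, fun y hy => Finset.card_le_one.mp hC8card y hy c8 hc8⟩
      rw [hC8eq] at hC8
      rcases Finset.mem_union.mp (hC8sub hc8) with hs8 | hw8
      · -- c8 ∈ S : use the x-side information about the chain ch
        obtain ⟨C4, hC4sub, hC4card, hC4⟩ :=
          h1s (ch i) (h₀.symm c8) ({x'} ∪ {g x'}) (hfrCh i c8 hs8)
        have hθs : τ (h₀ (h₀.symm c8)) = c8 := by
          rw [h₀.apply_symm_apply]; exact hτS c8 hs8
        -- two possible conversions
        have hconv1 : indep {ch i} {x'} {h₀.symm c8} → indep {rst i} {w} {g w} := by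
          intro h4
          have h5 := inv1s hS (τ.comp h₀) h4
          have hc1 : (τ.comp h₀) (ch i) = rst i := hτch i
          have hc2 : (τ.comp h₀) x' = w := hw
          have hc3 : (τ.comp h₀) (h₀.symm c8) = c8 := hθs
          rw [hc1, hc2, hc3] at h5
          exact stripSet hS hML h5 hC8
        have hconv2 : indep {ch i} {g x'} {h₀.symm c8} → indep {rst i} {w} {g w} := by
          intro h4
          have h5 := inv1s hS (τ.comp h₀) h4
          have hc1 : (τ.comp h₀) (ch i) = rst i := hτch i
          have hc2 : (τ.comp h₀) (g x') = rst (Fin.last n) := hw2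
          have hc3 : (τ.comp h₀) (h₀.symm c8) = c8 := hθs
          rw [hc1, hc2, hc3] at h5
          -- h5 : indep {rst i} {rst (Fin.last n)} {c8}
          have h6 : indep {rst i} {rst (Fin.last n)} {g w} := stripSet hS hML h5 hC8
          have h7 := hS.symmetry _ _ _ h6
          have h8 : indep {g w} ({rst (Fin.last n)} ∪ {w}) {rst i} :=
            hML.perfect_triviality _ _ _ _ h7 Finset.subset_union_left
          have h9 : indep {g w} {w} {rst (Fin.last n)} := hS.symmetry _ _ _ hiW
          exact hS.symmetry _ _ _ (hS.transitivity _ _ _ _ h9 h8)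
        rcases Finset.eq_empty_or_nonempty C4 with rfl | ⟨c4, hc4⟩
        · exact hconv1 (hML.perfect_triviality _ _ _ _ hC4 (Finset.empty_subset _))
        · have hC4eq : C4 = {c4} := Finset.eq_singleton_iff_unique_mem.mpr
            ⟨hc4, fun y hy => Finset.card_le_one.mp hC4card y hy c4 hc4⟩
          rw [hC4eq] at hC4
          rcases Finset.mem_union.mp (hC4sub hc4) with h4x | h4g
          · rw [Finset.mem_singleton] at h4x; subst h4x
            exact hconv1 hC4
          · rw [Finset.mem_singleton] at h4g; subst h4g
            exact hconv2 hC4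
      · rw [Finset.mem_singleton] at hw8; subst hw8
        exact hC8
  -- concatenation
  have hgeoL1 : IsGeodesic indep (rst ∘ Fin.rev) := geo_rev hS hgeoR
  have hjunc : (rst ∘ Fin.rev) (Fin.last n) = leg2 0 := by
    show rst (Fin.rev (Fin.last n)) = leg2 0
    rw [Fin.rev_last, hr0, hl20]
  have cross : ∀ (i : Fin (n+1)) (k : Fin (n+1)), (i:ℕ) < n → 0 < (k:ℕ) →
      indep {(rst ∘ Fin.rev) i} {(rst ∘ Fin.rev) (Fin.last n)} {leg2 k} := by
    intro i k hi hk
    have hL1l : (rst ∘ Fin.rev) (Fin.last n) = w := by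
      show rst (Fin.rev (Fin.last n)) = w
      rw [Fin.rev_last]; exact hr0
    rw [hL1l]
    show indep {rst (Fin.rev i)} {w} {leg2 k}
    by_cases hkl : (k:ℕ) = n
    · have hke : k = Fin.last n := Fin.ext (by simpa using hkl)
      rw [hke, hl2l]
      exact hU (Fin.rev i)
    · have h2 := hS.symmetry _ _ _ (hfrL2 k (Fin.rev i) hk (by omega))
      have h3 : indep {rst (Fin.rev i)} ({g w} ∪ {w}) {leg2 k} := by
        rwa [Finset.union_comm] at h2
      exact hS.transitivity _ _ _ _ (hU (Fin.rev i)) h3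
  obtain ⟨cbig, hgeoC, hc0, hcl⟩ :=
    concat hS hML (rst ∘ Fin.rev) leg2 hgeoL1 hgeoL2 hjunc cross
  set η : F ≃[L] F := ((τ.comp h₀).comp g).symm with hηdef
  have hηval : ∀ y, η y = g.symm (h₀.symm (τ.symm y)) := fun _ => rfl
  have hτw2 : τ.symm (rst (Fin.last n)) = h₀ (g x') := by
    rw [← hw2]; exact τ.symm_apply_apply _
  have hηw2 : η (rst (Fin.last n)) = x' := by
    rw [hηval, hτw2, h₀.symm_apply_apply, g.symm_apply_apply]
  have hηgw : η (g w) = g.symm ((τ.comp h₀).symm (g w)) := rfl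
  have h2n : 2*n+1 = n+n+1 := by omega
  refine ⟨⇑η ∘ (cbig ∘ Fin.cast h2n), geo_image hS η (geo_cast hS h2n hgeoC), ?_, ?_⟩
  · show η (cbig (Fin.cast h2n 0)) = x'
    have hz : Fin.cast h2n 0 = 0 := rfl
    rw [hz, hc0]
    show η (rst (Fin.rev 0)) = x'
    rw [Fin.rev_zero]
    exact hηw2
  · show η (cbig (Fin.cast h2n (Fin.last (2*n)))) = _
    have hz : Fin.cast h2n (Fin.last (2*n)) = Fin.last (n+n) := by
      apply Fin.ext
      first
      | (simp; omega)
      | simp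
    rw [hz, hcl, hl2l]
    exact hηgw

end SIR6

end PaperSIRAux

namespace PaperSIRAux

open FirstOrder PaperSIR

set_option linter.unusedSectionVars false

variable {L : FirstOrder.Language} {F : Type*} [L.Structure F] [DecidableEq F]
variable {indep : Finset F → Finset F → Finset F → Prop}

section SIR7

variable (hS : IsSIR (L := L) indep) (hML : IsMetricLike indep)

include hS hML in
lemma dense (h1s : OneSupported indep)
    (g : F ≃[L] F) {n : ℕ} (hn : 1 ≤ n)
    (hg : ∀ (X : Finset F) (x : F),
      MovesAlmostMaximally indep g X x ∨ MovesByDistance indep g X x n)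
    (x0 : F) (h₀ : F ≃[L] F) (S X : Finset F) (x : F) :
    ∃ (τ : F ≃[L] F) (x' : F), (∀ s ∈ S, τ s = s) ∧ SameTypeOver L X ![x] ![x'] ∧
      (indep {x'} X {g.symm ((τ.comp h₀).symm (g (τ (h₀ x'))))} ∨
       ∃ c : Fin (2*n+1) → F, IsGeodesic indep c ∧ c 0 = x' ∧
         c (Fin.last (2*n)) = g.symm ((τ.comp h₀).symm (g (τ (h₀ x'))))) := by
  classical
  obtain ⟨x', hstoX, hfrX, hbrX⟩ := hgc hS g n hg X
    (X.image ⇑g.symm ∪ S.image (fun s => g.symm (h₀.symm s))) x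
  rcases hbrX with hAx | hBx
  · -- the x-side moves almost maximally
    obtain ⟨rst, hstoR, hfrR⟩ :=
      hS.existence ![h₀ x', h₀ (g x')] (S ∪ {h₀ x'}) {g (h₀ x')}
    obtain ⟨σC, hfixC, hvalC⟩ := hstoR
    have hfix0 : σC (h₀ x') = h₀ x' :=
      hfixC (h₀ x') (Finset.mem_union_right _ (Finset.mem_singleton_self _))
    have hτS : ∀ s ∈ S, σC s = s := fun s hs => hfixC s (Finset.mem_union_left _ hs)
    have hw : σC (h₀ x') = h₀ x' := hfix0
    have hw2 : σC (h₀ (g x')) = rst 1 := by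
      have := hvalC 1
      simpa using this
    have hr0 : rst 0 = h₀ x' := by
      have := hvalC 0
      simp only [Matrix.cons_val_zero] at this
      rw [← this, hfix0]
    have hW2fr : indep {rst 1} (S ∪ {h₀ x'}) {g (h₀ x')} :=
      fr_single hS hfrR (mem_fset rst 1) (Finset.mem_singleton_self _)
    refine ⟨σC, x', hτS, hstoX, ?_⟩
    rw [hw]
    refine main_cases hS hML h1s x0 hn g σC h₀ S X x' hτS hw hw2 hfrX hW2fr ?_
    intro hiW
    left
    have hXgx : indep {x'} X {g x'} := stripSet hS hML hfrX hAx
    have h1 := hS.symmetry _ _ _ hXgx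
    have h2 := inv1 hS g.symm X h1
    rw [g.symm_apply_apply] at h2
    obtain ⟨e1, e2, e3, e4⟩ := eta_pack hS g σC h₀ hτS hw hw2
    have hα2 := e3 hiW
    have h3 := stripSet hS hML h2 hα2
    have h4 : indep {x'} X (X.image ⇑g.symm) :=
      sub_right hS hfrX
        (fun y hy => Finset.mem_union_right _ (Finset.mem_union_left _ hy))
    exact stripSet hS hML h4 h3
  · -- the x-side moves by distance n : we have a geodesic cc from x' to g x'
    obtain ⟨cc, hgeoCC, hcc0, hccl⟩ := hBx
    -- re-realize the chain freshly over its endpoints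
    obtain ⟨ch, hstoE, hfrE⟩ :=
      hS.existence cc ({x'} ∪ {g x'}) (S.image (fun s => h₀.symm s))
    obtain ⟨σE, hfixE, hvalE⟩ := hstoE
    have hcheq : ch = ⇑σE ∘ cc := funext fun i => (hvalE i).symm
    have hgeoCh : IsGeodesic indep ch := by rw [hcheq]; exact geo_image hS σE hgeoCC
    have hch0 : ch 0 = x' := by
      rw [← hvalE 0, hcc0]
      exact hfixE x' (Finset.mem_union_left _ (Finset.mem_singleton_self _))
    have hchl : ch (Fin.last n) = g x' := by
      rw [← hvalE _, hccl]
      exact hfixE (g x') (Finset.mem_union_right _ (Finset.mem_singleton_self _))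
    have hfrCh : ∀ (i : Fin (n+1)), ∀ s ∈ S,
        indep {ch i} ({x'} ∪ {g x'}) {h₀.symm s} := fun i s hs =>
      fr_single hS hfrE (mem_fset ch i) (Finset.mem_image.mpr ⟨s, hs, rfl⟩)
    -- stage B : apply hg at (S, h₀ x')
    have hw_ex : ∃ w, SameTypeOver L S ![h₀ x'] ![w] ∧
        (indep {w} S {g w} ∨
         ∃ ee : Fin (n+1) → F, IsGeodesic indep ee ∧ ee 0 = w ∧
           ee (Fin.last n) = g w) := by
      rcases hg S (h₀ x') with h | h
      · obtain ⟨w, h1, h2⟩ := h; exact ⟨w, h1, Or.inl h2⟩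
      · obtain ⟨w, h1, ee, h2, h3, h4⟩ := h; exact ⟨w, h1, Or.inr ⟨ee, h2, h3, h4⟩⟩
    obtain ⟨w, hstoW, hwbr⟩ := hw_ex
    obtain ⟨σB, hfixB, hvalB⟩ := sto1_elim hstoW
    -- stage C : realize the image chain over S ∪ {w}, freshly from {g w}
    obtain ⟨rst, hstoR, hfrR⟩ :=
      hS.existence (fun i => σB (h₀ (ch i))) (S ∪ {w}) {g w}
    obtain ⟨σC, hfixC, hvalC⟩ := hstoR
    set τ : F ≃[L] F := σC.comp σB with hτdef
    have hτS : ∀ s ∈ S, τ s = s := fun s hs => by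
      show σC (σB s) = s
      rw [hfixB s hs]
      exact hfixC s (Finset.mem_union_left _ hs)
    have hτch : ∀ i, τ (h₀ (ch i)) = rst i := fun i => hvalC i
    have hw : τ (h₀ x') = w := by
      show σC (σB (h₀ x')) = w
      rw [hvalB]
      exact hfixC w (Finset.mem_union_right _ (Finset.mem_singleton_self _))
    have hw2 : τ (h₀ (g x')) = rst (Fin.last n) := by
      rw [← hchl]; exact hτch _
    have hfrRi : ∀ i, indep {rst i} (S ∪ {w}) {g w} := fun i =>
      fr_single hS hfrR (mem_fset rst i) (Finset.mem_singleton_self _)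
    have hrsteq : rst = ⇑(τ.comp h₀) ∘ ch := funext fun i => (hτch i).symm
    have hgeoR : IsGeodesic indep rst := by
      rw [hrsteq]; exact geo_image hS _ hgeoCh
    refine ⟨τ, x', hτS, hstoX, ?_⟩
    rw [hw]
    refine main_cases hS hML h1s x0 hn g τ h₀ S X x' hτS hw hw2 hfrX
      (hfrRi (Fin.last n)) ?_
    intro hiW
    rcases hwbr with hAw | ⟨ee, hgeoEE, hee0, heel⟩
    · -- w-side moves almost maximally : indep {w} S {g w}
      obtain ⟨e1, e2, e3, e4⟩ := eta_pack hS g τ h₀ hτS hw hw2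
      obtain ⟨C7, hsub7, hcard7, h7⟩ := h1s w (g w) S hAw
      rcases Finset.eq_empty_or_nonempty C7 with rfl | ⟨c7, hc7⟩
      · -- totally free : build the second leg from fresh points
        right
        obtain ⟨lf, hgeoLf, hlf0, hlfl, hlffr⟩ :=
          fresh_chain hS hML x0 (k := n) hn h7 (fset rst)
        refine bx_wcase hS hML h1s hn g τ h₀ S x' hτS hw ch hch0 hchl hfrCh rst
          hτch hgeoR hfrRi lf hgeoLf hlf0 hlfl ?_ hiW
        intro k i hk0 hkn
        have h1 : indep {lf k} ∅ {rst i} :=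
          hlffr k (fun h => by rw [h] at hk0; simp at hk0)
            (fun h => by rw [h] at hkn; simp at hkn) (rst i) (mem_fset rst i)
        exact hML.perfect_triviality _ _ _ _ h1 (Finset.empty_subset _)
      · -- supported on some s ∈ S
        left
        have hC7eq : C7 = {c7} := Finset.eq_singleton_iff_unique_mem.mpr
          ⟨hc7, fun y hy => Finset.card_le_one.mp hcard7 y hy c7 hc7⟩
        rw [hC7eq] at h7
        have hc7S : c7 ∈ S := hsub7 hc7
        have hA := e4 c7 hc7S h7
        have hB := e3 hiW
        have h1 := hS.symmetry _ _ _ hA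
        have h2 := hS.symmetry _ _ _ hB
        have h3 := stripSet hS hML h1 h2
        have h4 := hS.symmetry _ _ _ h3
        have hpre : indep {x'} X {g.symm (h₀.symm c7)} :=
          sub_right hS hfrX (Finset.singleton_subset_iff.mpr
            (Finset.mem_union_right _ (Finset.mem_union_right _
              (Finset.mem_image.mpr ⟨c7, hc7S, rfl⟩))))
        exact stripSet hS hML hpre h4
    · -- w-side moves by distance n : re-realize ee over {w, g w}
      right
      obtain ⟨ee2, hstoD, hfrD⟩ := hS.existence ee ({w} ∪ {g w}) (fset rst)
      obtain ⟨σD, hfixD, hvalD⟩ := hstoD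
      have hee2eq : ee2 = ⇑σD ∘ ee := funext fun i => (hvalD i).symm
      have hgeoE2 : IsGeodesic indep ee2 := by
        rw [hee2eq]; exact geo_image hS σD hgeoEE
      have he20 : ee2 0 = w := by
        rw [← hvalD 0, hee0]
        exact hfixD w (Finset.mem_union_left _ (Finset.mem_singleton_self _))
      have he2l : ee2 (Fin.last n) = g w := by
        rw [← hvalD _, heel]
        exact hfixD (g w) (Finset.mem_union_right _ (Finset.mem_singleton_self _))
      refine bx_wcase hS hML h1s hn g τ h₀ S x' hτS hw ch hch0 hchl hfrCh rst
        hτch hgeoR hfrRi ee2 hgeoE2 he20 he2l ?_ hiW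
      intro k i _ _
      exact fr_single hS hfrD (mem_fset ee2 k) (mem_fset rst i)

end SIR7

end PaperSIRAux

namespace PaperSIRAux

open FirstOrder PaperSIR

set_option linter.unusedSectionVars false

variable {L : FirstOrder.Language} {F : Type*} [L.Structure F] [DecidableEq F]
variable {indep : Finset F → Finset F → Finset F → Prop}

/-- The witness configuration for a requirement `(X, x)` relative to the value `z`. -/
def Wit (indep : Finset F → Finset F → Finset F → Prop) (g : F ≃[L] F) (n : ℕ)
    (X : Finset F) (x x' z : F) : Prop :=
  SameTypeOver L X ![x] ![x'] ∧
    (indep {x'} X {z} ∨ ∃ c : Fin (2*n+1) → F, IsGeodesic indep c ∧ c 0 = x' ∧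
      c (Fin.last (2*n)) = z)

section SIR8

variable (hS : IsSIR (L := L) indep) (hML : IsMetricLike indep)

include hS hML in
lemma step_ex (h1s : OneSupported indep)
    (g : F ≃[L] F) {n : ℕ} (hn : 1 ≤ n)
    (hg : ∀ (X : Finset F) (x : F),
      MovesAlmostMaximally indep g X x ∨ MovesByDistance indep g X x n)
    (x0 : F) (req : Finset F × F) (a0 : F) (h₀ : F ≃[L] F) (P Q : Finset F) :
    ∃ (h₁ : F ≃[L] F) (P' Q' : Finset F),
      (∀ a ∈ P, h₁ a = h₀ a) ∧ (∀ b ∈ Q, h₁.symm b = h₀.symm b) ∧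
      P ⊆ P' ∧ Q ⊆ Q' ∧ a0 ∈ P' ∧ a0 ∈ Q' ∧
      ∃ x', x' ∈ P' ∧ g (h₁ x') ∈ Q' ∧
        Wit indep g n req.1 req.2 x' (g.symm (h₁.symm (g (h₁ x')))) := by
  obtain ⟨τ, x', hτS, hsto, hdisj⟩ :=
    dense hS hML h1s g hn hg x0 h₀ (P.image ⇑h₀ ∪ Q) req.1 req.2
  refine ⟨τ.comp h₀, insert a0 (insert x' P), insert a0 (insert (g ((τ.comp h₀) x')) Q),
    ?_, ?_, ?_, ?_, ?_, ?_, x', ?_, ?_, ?_⟩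
  · intro a ha
    show τ (h₀ a) = h₀ a
    exact hτS (h₀ a) (Finset.mem_union_left _ (Finset.mem_image.mpr ⟨a, ha, rfl⟩))
  · intro b hb
    show h₀.symm (τ.symm b) = h₀.symm b
    have hτb : τ b = b := hτS b (Finset.mem_union_right _ hb)
    have : τ.symm b = b := (congrArg τ.symm hτb).symm.trans (τ.symm_apply_apply b)
    rw [this]
  · intro a ha; exact Finset.mem_insert_of_mem (Finset.mem_insert_of_mem ha)
  · intro b hb; exact Finset.mem_insert_of_mem (Finset.mem_insert_of_mem hb)
  · exact Finset.mem_insert_self _ _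
  · exact Finset.mem_insert_self _ _
  · exact Finset.mem_insert_of_mem (Finset.mem_insert_self _ _)
  · exact Finset.mem_insert_of_mem (Finset.mem_insert_self _ _)
  · exact ⟨hsto, hdisj⟩

end SIR8

end PaperSIRAux

namespace PaperSIRAux

open FirstOrder PaperSIR

set_option linter.unusedSectionVars false

variable {L : FirstOrder.Language} {F : Type*} [L.Structure F] [DecidableEq F]
variable {indep : Finset F → Finset F → Finset F → Prop}

section SIR9

variable (hS : IsSIR (L := L) indep) (hML : IsMetricLike indep)

include hS hML in
lemma global_ex [Countable F] [Nonempty F]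
    (hrel : ∀ m, IsEmpty (L.Functions m))
    (h1s : OneSupported indep)
    (g : F ≃[L] F) {n : ℕ} (hn : 1 ≤ n)
    (hg : ∀ (X : Finset F) (x : F),
      MovesAlmostMaximally indep g X x ∨ MovesByDistance indep g X x n) :
    ∃ H : F ≃[L] F, ∀ (X : Finset F) (x : F),
      ∃ x', Wit indep g n X x x' (g.symm (H.symm (g (H x')))) := by
  classical
  obtain ⟨x0⟩ := (inferInstance : Nonempty F)
  obtain ⟨e, he⟩ := exists_surjective_nat F
  obtain ⟨req, hreq⟩ := exists_surjective_nat (Finset F × F)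
  -- the step relation
  set StepRel : ℕ → ((F ≃[L] F) × Finset F × Finset F) →
      ((F ≃[L] F) × Finset F × Finset F) → Prop := fun i cur nxt =>
    (∀ a ∈ cur.2.1, nxt.1 a = cur.1 a) ∧
    (∀ b ∈ cur.2.2, nxt.1.symm b = cur.1.symm b) ∧
    cur.2.1 ⊆ nxt.2.1 ∧ cur.2.2 ⊆ nxt.2.2 ∧ e i ∈ nxt.2.1 ∧ e i ∈ nxt.2.2 ∧
    (∃ x', x' ∈ nxt.2.1 ∧ g (nxt.1 x') ∈ nxt.2.2 ∧
      Wit indep g n (req i).1 (req i).2 x' (g.symm (nxt.1.symm (g (nxt.1 x')))))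
    with hStepRel
  have step_all : ∀ (i : ℕ) (cur : (F ≃[L] F) × Finset F × Finset F),
      ∃ nxt, StepRel i cur nxt := by
    intro i cur
    obtain ⟨h₁, P', Q', h1, h2, h3, h4, h5, h6, x', h7, h8, h9⟩ :=
      step_ex hS hML h1s g hn hg x0 (req i) (e i) cur.1 cur.2.1 cur.2.2
    exact ⟨⟨h₁, P', Q'⟩, h1, h2, h3, h4, h5, h6, x', h7, h8, h9⟩
  set st : ℕ → (F ≃[L] F) × Finset F × Finset F := fun i =>
    Nat.rec (⟨FirstOrder.Language.Equiv.refl L F, ∅, ∅⟩ :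
      (F ≃[L] F) × Finset F × Finset F)
      (fun i prev => Classical.choose (step_all i prev)) i with hst
  have hstep : ∀ i, StepRel i (st i) (st (i+1)) := fun i =>
    Classical.choose_spec (step_all i (st i))
  -- monotonicity of the P and Q components
  have Pmono : ∀ i j, i ≤ j → (st i).2.1 ⊆ (st j).2.1 := by
    intro i j hij
    induction j, hij using Nat.le_induction with
    | base => exact subset_rfl
    | succ j hij ih => exact ih.trans (hstep j).2.2.1
  have Qmono : ∀ i j, i ≤ j → (st i).2.2 ⊆ (st j).2.2 := by
    intro i j hij
    induction j, hij using Nat.le_induction with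
    | base => exact subset_rfl
    | succ j hij ih => exact ih.trans (hstep j).2.2.2.1
  -- stability of values
  have hstable : ∀ i j, i ≤ j → ∀ a ∈ (st i).2.1, (st j).1 a = (st i).1 a := by
    intro i j hij
    induction j, hij using Nat.le_induction with
    | base => intro a _; rfl
    | succ j hij ih =>
      intro a ha
      rw [(hstep j).1 a (Pmono i j hij ha)]
      exact ih a ha
  have hstableQ : ∀ i j, i ≤ j → ∀ b ∈ (st i).2.2, (st j).1.symm b = (st i).1.symm b := by
    intro i j hij
    induction j, hij using Nat.le_induction with
    | base => intro b _; rfl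
    | succ j hij ih =>
      intro b hb
      rw [(hstep j).2.1 b (Qmono i j hij hb)]
      exact ih b hb
  -- coverage
  have hcoverP : ∀ a : F, ∃ i, a ∈ (st i).2.1 := by
    intro a
    obtain ⟨i, rfl⟩ := he a
    exact ⟨i + 1, (hstep i).2.2.2.2.1⟩
  have hcoverQ : ∀ b : F, ∃ i, b ∈ (st i).2.2 := by
    intro b
    obtain ⟨i, rfl⟩ := he b
    exact ⟨i + 1, (hstep i).2.2.2.2.2.1⟩
  set idxP : F → ℕ := fun a => Classical.choose (hcoverP a) with hidxPdef
  have hidxP : ∀ a, a ∈ (st (idxP a)).2.1 := fun a => Classical.choose_spec (hcoverP a)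
  set idxQ : F → ℕ := fun b => Classical.choose (hcoverQ b) with hidxQdef
  have hidxQ : ∀ b, b ∈ (st (idxQ b)).2.2 := fun b => Classical.choose_spec (hcoverQ b)
  set toF : F → F := fun a => (st (idxP a)).1 a with htoF
  set invF : F → F := fun b => (st (idxQ b)).1.symm b with hinvF
  have hval : ∀ (a : F) (i : ℕ), a ∈ (st i).2.1 → toF a = (st i).1 a := by
    intro a i hi
    rcases le_total (idxP a) i with h | h
    · rw [htoF]
      exact (hstable (idxP a) i h a (hidxP a)).symm
    · rw [htoF]
      exact hstable i (idxP a) h a hi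
  have hvalQ : ∀ (b : F) (i : ℕ), b ∈ (st i).2.2 → invF b = (st i).1.symm b := by
    intro b i hi
    rcases le_total (idxQ b) i with h | h
    · rw [hinvF]
      exact (hstableQ (idxQ b) i h b (hidxQ b)).symm
    · rw [hinvF]
      exact hstableQ i (idxQ b) h b hi
  have hleft : ∀ a, invF (toF a) = a := by
    intro a
    obtain ⟨i, hi⟩ := hcoverP a
    obtain ⟨j, hj⟩ := hcoverQ (toF a)
    set k := max i j with hk
    have h1 : toF a = (st k).1 a := hval a k (Pmono i k (le_max_left _ _) hi)
    have h2 : invF (toF a) = (st k).1.symm (toF a) :=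
      hvalQ (toF a) k (Qmono j k (le_max_right _ _) hj)
    rw [h2, h1, FirstOrder.Language.Equiv.symm_apply_apply]
  have hright : ∀ b, toF (invF b) = b := by
    intro b
    obtain ⟨i, hi⟩ := hcoverQ b
    obtain ⟨j, hj⟩ := hcoverP (invF b)
    set k := max i j with hk
    have h1 : invF b = (st k).1.symm b := hvalQ b k (Qmono i k (le_max_left _ _) hi)
    have h2 : toF (invF b) = (st k).1 (invF b) :=
      hval (invF b) k (Pmono j k (le_max_right _ _) hj)
    rw [h2, h1, FirstOrder.Language.Equiv.apply_symm_apply]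
  set H : F ≃[L] F :=
    { toFun := toF
      invFun := invF
      left_inv := hleft
      right_inv := hright
      map_fun' := fun {m} f _ => ((hrel m).false f).elim
      map_rel' := by
        intro m r t
        set N := Finset.univ.sup (fun i : Fin m => idxP (t i)) with hN
        have hcomp : ∀ i, toF (t i) = (st N).1 (t i) := by
          intro i
          have hle : idxP (t i) ≤ N := by
            rw [hN]
            exact Finset.le_sup (f := fun i : Fin m => idxP (t i)) (Finset.mem_univ i)
          exact hval (t i) N (Pmono (idxP (t i)) N hle (hidxP (t i)))
        have heq : toF ∘ t = ⇑(st N).1 ∘ t := funext hcomp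
        show Language.Structure.RelMap r (toF ∘ t) ↔ Language.Structure.RelMap r t
        rw [heq]
        exact (st N).1.map_rel' r t } with hH
  refine ⟨H, ?_⟩
  intro X x
  obtain ⟨i, hi⟩ := hreq (X, x)
  obtain ⟨x', hx'P, hgwQ, hwit⟩ := (hstep i).2.2.2.2.2.2
  have hH1 : H x' = (st (i+1)).1 x' := hval x' (i+1) hx'P
  have hH2 : H.symm (g (H x')) = (st (i+1)).1.symm (g ((st (i+1)).1 x')) := by
    have : H.symm (g (H x')) = invF (g (H x')) := rfl
    rw [this, hH1]
    exact hvalQ _ (i+1) hgwQ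
  refine ⟨x', ?_⟩
  have hreq1 : (req i).1 = X := by rw [hi]
  have hreq2 : (req i).2 = x := by rw [hi]
  rw [← hreq1, ← hreq2]
  have hz : g.symm (H.symm (g (H x'))) =
      g.symm ((st (i+1)).1.symm (g ((st (i+1)).1 x'))) := by rw [hH2]
  rw [hz]
  exact hwit

end SIR9

end PaperSIRAux

open PaperSIR PaperSIRAux

theorem statement_15 {L : FirstOrder.Language} [L.IsRelational]
    {F : Type*} [L.Structure F] [Countable F] [DecidableEq F]
    (indep : Finset F → Finset F → Finset F → Prop)
    (htrans : TransitiveStruct L F)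
    (hSIR : IsSIR (L := L) indep) (hML : IsMetricLike indep)
    (hbdd : Bounded indep) (h1sup : OneSupported indep)
    (g : F ≃[L] F) (n : ℕ)
    (hg : ∀ (X : Finset F) (x : F),
      MovesAlmostMaximally indep g X x ∨ MovesByDistance indep g X x n) :
    ∃ h : F ≃[L] F, ∀ (X : Finset F) (x : F),
      MovesAlmostMaximally indep (g⁻¹ * h⁻¹ * g * h) X x ∨
      MovesByDistance indep (g⁻¹ * h⁻¹ * g * h) X x (2 * n) := by
  classical
  cases isEmpty_or_nonempty F with
  | inl hF => exact ⟨1, fun X x => (hF.false x).elim⟩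
  | inr hNe =>
    rcases Nat.eq_zero_or_pos n with rfl | hn
    · refine ⟨1, fun X x => Or.inr ?_⟩
      refine ⟨x, sto1_intro (FirstOrder.Language.Equiv.refl L F) (fun _ _ => rfl) rfl,
        fun _ => x, ⟨?_, ?_⟩, rfl, ?_⟩
      · intro a b _
        apply Fin.ext
        have h1 := a.isLt
        have h2 := b.isLt
        omega
      · intro i j k hij _
        exfalso
        have h1 : (i:ℕ) < (j:ℕ) := hij
        have h2 := j.isLt
        omega
      · show x = (g⁻¹ * (1 : F ≃[L] F)⁻¹ * g * 1) x
        show x = g.symm (g x)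
        exact (g.symm_apply_apply x).symm
    · obtain ⟨H, hH⟩ := global_ex hSIR hML ‹L.IsRelational› h1sup g hn hg
      refine ⟨H, fun X x => ?_⟩
      obtain ⟨x', hsto, hdisj⟩ := hH X x
      rcases hdisj with h | h
      · exact Or.inl ⟨x', hsto, h⟩
      · exact Or.inr ⟨x', hsto, h⟩
end

section
/- Let M = (M, ⊕, ≼) be a partially ordered commutative semigroup and let F be an M-metric space which admits an M-shortest-path independence relation ⫫. Then ⫫ satisfies Perfect triviality for pairs of points: for all a, b ∈ F and all finite C ⊆ C' ⊆ F, if a ⫫_C b then a ⫫_{C'} b. -/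
namespace PaperSVM

/-- Addition on `M ∪ {0}`, with `none` playing the role of the adjoined neutral
element `0`. -/
def oadd {M : Type*} [Add M] : Option M → Option M → Option M
  | none, b => b
  | some a, none => some a
  | some a, some b => some (a + b)

/-- The order on `M ∪ {0}`, extending the order of `M` so that `none = 0` is the
minimum element. -/
def ole {M : Type*} [LE M] : Option M → Option M → Prop
  | none, _ => True
  | some _, none => False
  | some a, some b => a ≤ b

variable {M : Type*} [AddCommSemigroup M] [PartialOrder M] {F : Type*}

/-- The `M`-metric space axioms for a distance function `d : F × F → M ∪ {0}`:
symmetry, `d(x,y) = 0` iff `x = y`, and the triangle inequality for distinct points. -/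
structure IsMMetric (d : F → F → Option M) : Prop where
  symm : ∀ x y : F, d x y = d y x
  eq_zero_iff : ∀ x y : F, d x y = none ↔ x = y
  triangle : ∀ a b c : F, a ≠ b → b ≠ c → a ≠ c → ole (d a b) (oadd (d a c) (d c b))

/-- `m` is the infimum with respect to `≼` of the set `{d(a,c) ⊕ d(c,b) : c ∈ C}`. -/
def IsShortestPathInf (d : F → F → Option M) (a b : F) (C : Finset F)
    (m : Option M) : Prop :=
  (∀ c ∈ C, ole m (oadd (d a c) (d c b))) ∧
    ∀ m' : Option M, (∀ c ∈ C, ole m' (oadd (d a c) (d c b))) → ole m' m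

/-- `F` admits an `M`-shortest-path independence relation: all the relevant infima
exist. -/
def AdmitsSPIR (d : F → F → Option M) : Prop :=
  ∀ (a b : F) (C : Finset F), ∃ m : Option M, IsShortestPathInf d a b C m

/-- The `M`-shortest-path independence relation: `A ⫫_C B` iff for all `a ∈ A`,
`b ∈ B`, `d(a,b) = inf_≼ {d(a,c) ⊕ d(c,b) : c ∈ C}`. -/
def spIndep (d : F → F → Option M) (A C B : Finset F) : Prop :=
  ∀ a ∈ A, ∀ b ∈ B, IsShortestPathInf d a b C (d a b)

/-- The group of `d`-preserving bijections of `F`, as a subgroup of the permutation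
group of `F`. -/
def distAut (d : F → F → Option M) : Subgroup (Equiv.Perm F) where
  carrier := {g | ∀ x y : F, d (g x) (g y) = d x y}
  one_mem' := fun _ _ => rfl
  mul_mem' := by
    intro a b ha hb x y
    have : d (a (b x)) (a (b y)) = d x y := by rw [ha, hb]
    simpa [Equiv.Perm.mul_apply] using this
  inv_mem' := by
    intro g hg x y
    have := hg (g⁻¹ x) (g⁻¹ y)
    simpa using this.symm

/-- Tuples `a`, `a'` have the same type over `X` with respect to the group `G` of
permutations: some `g ∈ G` fixes `X` pointwise and maps `a` to `a'`. -/
def SameTypeOverP (G : Subgroup (Equiv.Perm F)) (X : Finset F) {n : ℕ}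
    (a a' : Fin n → F) : Prop :=
  ∃ g ∈ G, (∀ x ∈ X, (g : Equiv.Perm F) x = x) ∧
    ∀ i, (g : Equiv.Perm F) (a i) = a' i

/-- A stationary independence relation on `F` with respect to the automorphism
group `G`. -/
structure IsSIRP [DecidableEq F] (G : Subgroup (Equiv.Perm F))
    (indep : Finset F → Finset F → Finset F → Prop) : Prop where
  invariance : ∀ g ∈ G, ∀ A C B : Finset F,
    indep A C B ↔ indep (A.image g) (C.image g) (B.image g)
  symmetry : ∀ A C B, indep A C B → indep B C A
  monotonicity_left : ∀ A C B D, indep A C (B ∪ D) → indep A C B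
  monotonicity_right : ∀ A C B D, indep A C (B ∪ D) → indep A (B ∪ C) D
  existence : ∀ {n : ℕ} (a : Fin n → F) (C B : Finset F),
    ∃ a' : Fin n → F, SameTypeOverP G C a a' ∧
      indep (Finset.image a' Finset.univ) C B
  transitivity : ∀ A C B B', indep A C B → indep A (B ∪ C) B' → indep A C B'
  stationarity : ∀ {n : ℕ} (a a' : Fin n → F) (C B : Finset F),
    SameTypeOverP G C a a' → indep (Finset.image a Finset.univ) C B →
    indep (Finset.image a' Finset.univ) C B → SameTypeOverP G (B ∪ C) a a'

/-- A SIR is 1-supported if whenever `a ⫫_C b` there is `C' ⊆ C` with `|C'| ≤ 1`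
and `a ⫫_{C'} b`. -/
def OneSupported (indep : Finset F → Finset F → Finset F → Prop) : Prop :=
  ∀ (a b : F) (C : Finset F), indep {a} C {b} →
    ∃ C' ⊆ C, C'.card ≤ 1 ∧ indep {a} C' {b}

/-- `F` is a homogeneous `M`-metric space: every `d`-preserving bijection between
finite subsets of `F` extends to a `d`-preserving bijection of `F`. -/
def HomogeneousD (d : F → F → Option M) : Prop :=
  ∀ (X : Finset F) (f : F → F), Set.InjOn f X →
    (∀ x ∈ X, ∀ y ∈ X, d (f x) (f y) = d x y) →
    ∃ g ∈ distAut d, ∀ x ∈ X, (g : Equiv.Perm F) x = f x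

/-- `nfold n a` is the `(n+1)`-fold sum `a ⊕ ⋯ ⊕ a`. -/
def nfold {N : Type*} [AddCommSemigroup N] : ℕ → N → N
  | 0, a => a
  | n + 1, a => a + nfold n a

end PaperSVM

open PaperSVM

/-- the shortest-path independence relation of an `M`-metric space
admitting one satisfies Perfect triviality for pairs of points. -/
theorem statement_18 {M : Type*} [AddCommSemigroup M] [PartialOrder M]
    {F : Type*}
    (hle : ∀ a b : M, a ≤ a + b)
    (hmono : ∀ a b c : M, b ≤ c → a + b ≤ a + c)
    (d : F → F → Option M) (hmet : IsMMetric d) (hadm : AdmitsSPIR d)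
    (a b : F) (C C' : Finset F) (hCC : C ⊆ C')
    (h : spIndep d {a} C {b}) :
    spIndep d {a} C' {b} := by
  have hrefl : ∀ m : Option M, ole m m := by
    intro m; cases m <;> simp [ole]
  have hadd_none : ∀ m : Option M, oadd m none = m := by
    intro m; cases m <;> rfl
  intro x hx y hy
  simp only [Finset.mem_singleton] at hx hy
  subst hx; subst hy
  have h' := h x (Finset.mem_singleton_self x) y (Finset.mem_singleton_self y)
  constructor
  · intro c hc
    by_cases hab : x = y
    · rw [(hmet.eq_zero_iff x y).mpr hab]; trivial
    by_cases hca : c = x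
    · rw [hca, (hmet.eq_zero_iff x x).mpr rfl]; exact hrefl _
    by_cases hcb : c = y
    · rw [hcb, (hmet.eq_zero_iff y y).mpr rfl, hadd_none]; exact hrefl _
    · exact hmet.triangle x y c hab (fun e => hcb e.symm) (fun e => hca e.symm)
  · intro m' hm'
    exact h'.2 m' (fun c hc => hm' c (hCC hc))
end
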